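/- Compatibility of the cut transform with iteration: let S be a finite type and e : S → S → ℕ∞ take values only in {0, 1, ω, ⊤} (with ω := 2), and assume e = e ⋄ e. Then M(e♯) = (M(e))♯, where e♯ : S → S → ℕ∞ is defined by e♯ s t = ω if e s t = 1 and (s,t) is not stable in e, and e♯ s t = e s t otherwise; and for E = M(e), E♯ : Set S → Set S → ℕ∞ is defined by E♯(A,B) = ω if E(A,B) = 1 and there is no R ⊆ S with E(R,R) = 0, E(A,R) ≤ 1 and E(R,B) ≤ 1, and E♯(A,B) = E(A,B) otherwise. -/

import Mathlib

/-- The cut transform of a flow matrix `f : S → S → ℕ∞`: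
`M(f)(A,B) = sup {f s t | s ∈ A, t ∉ B}`. -/
noncomputable def cutTransform {S : Type*} (f : S → S → ℕ∞) (A B : Set S) : ℕ∞ :=
  ⨆ s ∈ A, ⨆ t ∈ Bᶜ, f s t

/-- The bottleneck product of two flow matrices:
`(f₁ ⋄ f₂) s t = sup_{r ∈ S} min (f₁ s r) (f₂ r t)`. -/
noncomputable def bottleneckProd {S : Type*} (f₁ f₂ : S → S → ℕ∞) (s t : S) : ℕ∞ :=
  ⨆ r : S, min (f₁ s r) (f₂ r t)

/-- An edge `(s,t)` is stable in `e` if there are no `s₀, t₀` with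
`e s s₀ ≥ ω`, `e s₀ t₀ = 1` and `e t₀ t ≥ ω` (where `ω = 2`). -/
def Stable {S : Type*} (e : S → S → ℕ∞) (s t : S) : Prop :=
  ¬ ∃ s₀ t₀ : S, 2 ≤ e s s₀ ∧ e s₀ t₀ = 1 ∧ 2 ≤ e t₀ t

open Classical in
/-- The iteration `e♯` of a flow matrix: unstable `1`-edges are raised to `ω = 2`. -/
noncomputable def sharpFlow {S : Type*} (e : S → S → ℕ∞) (s t : S) : ℕ∞ :=
  if e s t = 1 ∧ ¬ Stable e s t then 2 else e s t

open Classical in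
/-- The iteration `E♯` of a cut matrix: unstable `1`-coordinates are raised to `ω = 2`. -/
noncomputable def sharpCut {S : Type*} (E : Set S → Set S → ℕ∞) (A B : Set S) : ℕ∞ :=
  if E A B = 1 ∧ ¬ ∃ R : Set S, E R R = 0 ∧ E A R ≤ 1 ∧ E R B ≤ 1 then 2
  else E A B

/-!
Idempotence `e = e ⋄ e` makes every threshold relation `c ≤ e s t` transitive. If `M(e)(A,B) ≠ 1`,
raising `1`-edges to `ω` does not change the supremum. If `M(e)(A,B) = 1`, an unstable crossing edge
`s → s₀ → t₀ → t` rules out every witness `R`, since `R` must contain `s₀` but not `t₀`; conversely,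
if all crossing `1`-edges are stable, the set of states reached from `A` by an `ω`-edge followed by
at most one positive edge is a witness.
-/

section

variable {S : Type*}

section Cut

variable {f g : S → S → ℕ∞} {A B : Set S} {c : ℕ∞}

theorem cutTransform_le_iff : cutTransform f A B ≤ c ↔ ∀ s ∈ A, ∀ t ∉ B, f s t ≤ c := by
  simp only [cutTransform, iSup₂_le_iff, Set.mem_compl_iff]

theorem le_cutTransform {s t : S} (hs : s ∈ A) (ht : t ∉ B) : f s t ≤ cutTransform f A B :=
  cutTransform_le_iff.1 le_rfl s hs t ht

theorem cutTransform_mono (h : ∀ s t, f s t ≤ g s t) : cutTransform f A B ≤ cutTransform g A B :=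
  cutTransform_le_iff.2 fun _ hs _ ht => (h _ _).trans (le_cutTransform hs ht)

end Cut

theorem ENat.two_le_of_one_lt {x : ℕ∞} (h : 1 < x) : 2 ≤ x := Order.add_one_le_of_lt h

theorem le_of_eq_bottleneckProd_self {e : S → S → ℕ∞}
    (hidem : e = fun s t => bottleneckProd e e s t) {c : ℕ∞} {s r t : S}
    (hsr : c ≤ e s r) (hrt : c ≤ e r t) : c ≤ e s t := by
  rw [hidem]
  exact (le_min hsr hrt).trans (le_iSup (fun r => min (e s r) (e r t)) r)

section Sharp

variable {e : S → S → ℕ∞} {A B : Set S} {s t : S}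

theorem le_sharpFlow (s t : S) : e s t ≤ sharpFlow e s t := by
  unfold sharpFlow
  split_ifs with h
  · exact h.1 ▸ one_le_two
  · exact le_rfl

theorem sharpFlow_of_not_stable (h₁ : e s t = 1) (h : ¬ Stable e s t) : sharpFlow e s t = 2 :=
  if_pos ⟨h₁, h⟩

theorem sharpFlow_le {c : ℕ∞} (h : e s t ≤ c) (hc : c ≠ 1) : sharpFlow e s t ≤ c := by
  unfold sharpFlow
  split_ifs with h'
  · exact ENat.two_le_of_one_lt ((h'.1 ▸ h).lt_of_ne hc.symm)
  · exact h

theorem cutTransform_sharpFlow_le {c : ℕ∞} (h : cutTransform e A B ≤ c) (hc : c ≠ 1) :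
    cutTransform (sharpFlow e) A B ≤ c :=
  cutTransform_le_iff.2 fun _ hs _ ht => sharpFlow_le ((le_cutTransform hs ht).trans h) hc

theorem cutTransform_sharpFlow_of_stable (h : ∀ s ∈ A, ∀ t ∉ B, e s t = 1 → Stable e s t) :
    cutTransform (sharpFlow e) A B = cutTransform e A B := by
  refine le_antisymm (cutTransform_le_iff.2 fun s hs t ht => ?_) (cutTransform_mono le_sharpFlow)
  rw [sharpFlow, if_neg fun h' => h'.2 (h s hs t ht h'.1)]
  exact le_cutTransform hs ht

theorem cutTransform_self_ne_zero_of_not_stable {R : Set S} (hs : s ∈ A) (ht : t ∉ B)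
    (hst : ¬ Stable e s t) (hAR : cutTransform e A R ≤ 1) (hRB : cutTransform e R B ≤ 1) :
    cutTransform e R R ≠ 0 := by
  obtain ⟨s₀, t₀, hss₀, hs₀t₀, ht₀t⟩ := not_not.1 hst
  have hs₀ : s₀ ∈ R := by
    by_contra h
    exact absurd (hss₀.trans ((le_cutTransform hs h).trans hAR)) (by norm_num)
  have ht₀ : t₀ ∉ R := fun h => absurd (ht₀t.trans ((le_cutTransform h ht).trans hRB)) (by norm_num)
  exact Order.one_le_iff_ne_zero.1 (hs₀t₀ ▸ le_cutTransform hs₀ ht₀)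

end Sharp

def omegaReach (e : S → S → ℕ∞) (A : Set S) : Set S :=
  {r | ∃ s ∈ A, ∃ r₀, 2 ≤ e s r₀ ∧ (r₀ = r ∨ 1 ≤ e r₀ r)}

section OmegaReach

variable {e : S → S → ℕ∞} {A B : Set S}

theorem cutTransform_omegaReach_self (hidem : e = fun s t => bottleneckProd e e s t) :
    cutTransform e (omegaReach e A) (omegaReach e A) = 0 := by
  refine nonpos_iff_eq_zero.1 (cutTransform_le_iff.2 fun r hr r' hr' => ?_)
  by_contra hpos
  have hrr' : 1 ≤ e r r' := Order.one_le_iff_ne_zero.2 (by simpa using hpos)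
  obtain ⟨s, hs, r₀, hsr₀, hr₀r⟩ := hr
  refine hr' ⟨s, hs, r₀, hsr₀, Or.inr ?_⟩
  rcases hr₀r with rfl | hr₀r
  · exact hrr'
  · exact le_of_eq_bottleneckProd_self hidem hr₀r hrr'

theorem cutTransform_omegaReach_snd_le_one : cutTransform e A (omegaReach e A) ≤ 1 := by
  refine cutTransform_le_iff.2 fun s hs r hr => ?_
  by_contra h
  exact hr ⟨s, hs, r, ENat.two_le_of_one_lt (not_le.1 h), Or.inl rfl⟩

theorem cutTransform_omegaReach_fst_le_one (hidem : e = fun s t => bottleneckProd e e s t)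
    (hAB : cutTransform e A B ≤ 1) (hstable : ∀ s ∈ A, ∀ t ∉ B, e s t = 1 → Stable e s t) :
    cutTransform e (omegaReach e A) B ≤ 1 := by
  have htrans : ∀ {c : ℕ∞} {x y z : S}, c ≤ e x y → c ≤ e y z → c ≤ e x z :=
    le_of_eq_bottleneckProd_self hidem
  refine cutTransform_le_iff.2 fun r hr b hb => ?_
  by_contra h
  have hrb : 2 ≤ e r b := ENat.two_le_of_one_lt (not_le.1 h)
  obtain ⟨s, hs, r₀, hsr₀, hr₀r⟩ := hr
  have hsb : e s b ≤ 1 := (le_cutTransform hs hb).trans hAB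
  have hsr : ¬ 2 ≤ e s r := fun hsr => absurd ((htrans hsr hrb).trans hsb) (by norm_num)
  rcases hr₀r with rfl | hr₀r
  · exact hsr hsr₀
  rcases hr₀r.eq_or_lt with hr₀r | hr₀r
  · have hsb₁ : e s b = 1 :=
      le_antisymm hsb (htrans (htrans (one_le_two.trans hsr₀) hr₀r.le) (one_le_two.trans hrb))
    exact hstable s hs b hb hsb₁ ⟨r₀, r, hsr₀, hr₀r.symm, hrb⟩
  · exact hsr (htrans hsr₀ (ENat.two_le_of_one_lt hr₀r))

end OmegaReach

end

theorem cutTransform_sharp_general {S : Type*} (e : S → S → ℕ∞)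
    (hidem : e = fun s t => bottleneckProd e e s t) (A B : Set S) :
    cutTransform (sharpFlow e) A B = sharpCut (cutTransform e) A B := by
  by_cases h₁ : cutTransform e A B = 1
  · by_cases hstable : ∀ s ∈ A, ∀ t ∉ B, e s t = 1 → Stable e s t
    · have hR : ∃ R : Set S, cutTransform e R R = 0 ∧ cutTransform e A R ≤ 1 ∧
          cutTransform e R B ≤ 1 :=
        ⟨omegaReach e A, cutTransform_omegaReach_self hidem, cutTransform_omegaReach_snd_le_one,
          cutTransform_omegaReach_fst_le_one hidem h₁.le hstable⟩
      rw [sharpCut, if_neg fun h => h.2 hR, cutTransform_sharpFlow_of_stable hstable]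
    · push Not at hstable
      obtain ⟨s, hs, t, ht, hst₁, hst⟩ := hstable
      rw [sharpCut, if_pos ⟨h₁, fun ⟨R, hRR, hAR, hRB⟩ =>
        cutTransform_self_ne_zero_of_not_stable hs ht hst hAR hRB hRR⟩]
      exact le_antisymm (cutTransform_sharpFlow_le (h₁.trans_le one_le_two) (by norm_num))
        (sharpFlow_of_not_stable hst₁ hst ▸ le_cutTransform hs ht)
  · rw [sharpCut, if_neg fun h => h₁ h.1]
    exact le_antisymm (cutTransform_sharpFlow_le le_rfl h₁) (cutTransform_mono le_sharpFlow)

/-- Compatibility of the cut transform with iteration: `M(e♯) = (M(e))♯` for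
idempotent `e` with values in `{0, 1, ω, ⊤}` (`ω = 2`). -/
theorem cutTransform_sharp {S : Type*} [Fintype S] (e : S → S → ℕ∞)
    (hval : ∀ s t : S, e s t = 0 ∨ e s t = 1 ∨ e s t = 2 ∨ e s t = ⊤)
    (hidem : e = fun s t => bottleneckProd e e s t) (A B : Set S) :
    cutTransform (sharpFlow e) A B = sharpCut (cutTransform e) A B :=
  cutTransform_sharp_general e hidem A B
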